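/- arXiv:2505.16511 — 2 statements merged into one kernel-verified Lean document; each statement's English description precedes it below -/
import Mathlib

section
/- Suppose the multilayer NODE system satisfies: each scalar activation φ^{i+1} is incrementally sector bounded by [α^{i+1}, β^{i+1}] on ℝ, and there exist a symmetric positive definite P ∈ ℝ^{n×n} and constants 0 < p̲ ≤ p̄, γ > 0 with p̲·I ⪯ P ⪯ p̄·I such that for all v⁰ ∈ ℝⁿ and vⁱ ∈ ℝ^{mᵢ}, i = 1,…,k: ⟨v⁰, (AᵀP + PA + γP)·v⁰⟩ + 2·⟨v⁰, P·W^{k+1}·vᵏ⟩ − 2·Σ_{i=0}^{k−1} ⟨v^{i+1} − α^{i+1}·W^{i+1}·vⁱ, v^{i+1} − β^{i+1}·W^{i+1}·vⁱ⟩ ≤ 0. Let e : ℝⁿ → ℝⁿ satisfy ‖e(y)‖ ≤ ε for all y ∈ ℝⁿ, let x : [0,∞) → ℝⁿ be differentiable with ẋ(t) = A·x(t) + Z(x(t)) + e(x(t)) for all t ≥ 0, and let x_nn be a solution of the multilayer NODE system. Then for all t ≥ 0: ‖x(t) − x_nn(t)‖ ≤ √(p̄/p̲)·‖x(0) − x_nn(0)‖·e^{−(γ/2)·t}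 + (2ε/γ)·√(p̄/p̲)·(1 − e^{−(γ/2)·t}). -/
/-!
The squared `P`-distance `Q = (x - xₙₙ)ᵀ P (x - xₙₙ)` is a Lyapunov function for the error.
Feeding the differences of the layer outputs into the matrix inequality and using the incremental
sector bounds of the activations gives
`2 (y - z)ᵀ P (Z y - Z z) ≤ -(y - z)ᵀ (AᵀP + PA + γP) (y - z)`, so `Q' ≤ -γ Q + 2 √Q ‖e‖_P`.
Hence `√Q` obeys the linear Grönwall inequality `(√Q)' ≤ -(γ/2) √Q + √p̄ ε`, and
`p̲ I ⪯ P ⪯ p̄ I` converts `P`-distances to Euclidean ones.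
-/

open Matrix

noncomputable def eNorm {n : ℕ} (v : Fin n → ℝ) : ℝ := Real.sqrt (v ⬝ᵥ v)

/-- `nnLayer m W b φ i` is the paper's `wⁱ`; `W i`, `b i`, `φ i` are its `W^{i+1}`, `b^{i+1}`,
`φ^{i+1}`. -/
noncomputable def nnLayer (m : ℕ → ℕ)
    (W : (i : ℕ) → Matrix (Fin (m (i + 1))) (Fin (m i)) ℝ)
    (b : (i : ℕ) → Fin (m (i + 1)) → ℝ)
    (φ : ℕ → ℝ → ℝ) :
    (i : ℕ) → (Fin (m 0) → ℝ) → Fin (m i) → ℝ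
  | 0, x => x
  | i + 1, x => fun j => φ i ((W i).mulVec (nnLayer m W b φ i x) j + b i j)

theorem gronwallBound_add (δ₁ δ₂ K ε₁ ε₂ x : ℝ) :
    gronwallBound (δ₁ + δ₂) K (ε₁ + ε₂) x
      = gronwallBound δ₁ K ε₁ x + gronwallBound δ₂ K ε₂ x := by
  unfold gronwallBound
  split_ifs <;> ring

theorem gronwallBound_neg_mul_self (δ K x : ℝ) : gronwallBound δ (-K) (K * δ) x = δ := by
  unfold gronwallBound
  split_ifs with hK
  · simp [neg_eq_zero.mp hK]
  · have hK' : K ≠ 0 := fun h => hK (by simp [h])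
    field_simp
    ring

theorem le_gronwallBound_of_hasDerivAt {f f' : ℝ → ℝ} {δ K ε : ℝ}
    (hf : ∀ t, 0 ≤ t → HasDerivAt f (f' t) t) (h0 : f 0 ≤ δ)
    (bound : ∀ t, 0 ≤ t → f' t ≤ K * f t + ε) {t : ℝ} (ht : 0 ≤ t) :
    f t ≤ gronwallBound δ K ε t := by
  simpa using le_gronwallBound_of_liminf_deriv_right_le (a := 0) (b := t)
    (fun s hs => (hf s hs.1).continuousAt.continuousWithinAt)
    (fun s hs _ hr => (hf s hs.1).hasDerivWithinAt.liminf_right_slope_le hr) h0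
    (fun s hs => bound s hs.1) t ⟨ht, le_rfl⟩

/-- `√Q` need not be differentiable where `Q` vanishes, so the Grönwall inequality is applied to
`√(Q + r²)`, whose bound exceeds the claimed one by exactly `r`. -/
theorem sqrt_le_gronwallBound_of_deriv_le {Q Q' : ℝ → ℝ} {K E : ℝ} (hK : 0 ≤ K) (hE : 0 ≤ E)
    (hQ : ∀ t, 0 ≤ Q t) (hQ' : ∀ t, 0 ≤ t → HasDerivAt Q (Q' t) t)
    (bound : ∀ t, 0 ≤ t → Q' t ≤ -(2 * K) * Q t + 2 * E * √(Q t)) {t : ℝ} (ht : 0 ≤ t) :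
    √(Q t) ≤ gronwallBound √(Q 0) (-K) E t := by
  refine le_of_forall_pos_le_add fun r hr => ?_
  have hr2 : 0 < r ^ 2 := by positivity
  have hpos : ∀ s, 0 < Q s + r ^ 2 := fun s => by linarith [hQ s]
  have hderiv : ∀ s, 0 ≤ s → HasDerivAt (fun s => √(Q s + r ^ 2))
      (Q' s / (2 * √(Q s + r ^ 2))) s := fun s hs =>
    (((hQ' s hs).add_const _).sqrt (hpos s).ne').congr_deriv (by ring)
  have hbound : ∀ s, 0 ≤ s → Q' s / (2 * √(Q s + r ^ 2))
      ≤ -K * √(Q s + r ^ 2) + (E + K * r) := by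
    intro s hs
    have hu : 0 < √(Q s + r ^ 2) := Real.sqrt_pos.mpr (hpos s)
    have hu2 := Real.sq_sqrt (hpos s).le
    have hQu : √(Q s) ≤ √(Q s + r ^ 2) := Real.sqrt_le_sqrt (by linarith)
    have hru : r ≤ √(Q s + r ^ 2) := Real.le_sqrt_of_sq_le (by linarith [hQ s])
    rw [div_le_iff₀ (by positivity)]
    nlinarith [bound s hs, mul_le_mul_of_nonneg_left hQu hE, mul_le_mul_of_nonneg_left hru hK]
  have h0 : √(Q 0 + r ^ 2) ≤ √(Q 0) + r := by
    rw [Real.sqrt_le_left (by positivity)]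
    nlinarith [Real.sq_sqrt (hQ 0), Real.sqrt_nonneg (Q 0)]
  calc √(Q t) ≤ √(Q t + r ^ 2) := Real.sqrt_le_sqrt (by linarith)
    _ ≤ gronwallBound (√(Q 0) + r) (-K) (E + K * r) t :=
      le_gronwallBound_of_hasDerivAt hderiv h0 hbound ht
    _ = gronwallBound √(Q 0) (-K) E t + r := by
      rw [gronwallBound_add, gronwallBound_neg_mul_self]

section QuadraticForm

variable {ι : Type*} [Fintype ι]

theorem hasDerivAt_dotProduct_mulVec_self {P : Matrix ι ι ℝ} (hP : Pᵀ = P)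
    {d : ℝ → ι → ℝ} {d' : ι → ℝ} {t : ℝ} (hd : HasDerivAt d d' t) :
    HasDerivAt (fun s => d s ⬝ᵥ P *ᵥ d s) (2 * (d t ⬝ᵥ P *ᵥ d')) t := by
  have hd_apply := hasDerivAt_pi.mp hd
  have hPd : HasDerivAt (fun s => P *ᵥ d s) (P *ᵥ d') t :=
    hasDerivAt_pi.mpr fun i => by
      simpa [mulVec, dotProduct] using
        HasDerivAt.fun_sum fun j _ => (hd_apply j).const_mul (P i j)
  have hPd_apply := hasDerivAt_pi.mp hPd
  refine (HasDerivAt.fun_sum (u := Finset.univ) fun i _ =>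
    (hd_apply i).fun_mul (hPd_apply i)).congr_deriv ?_
  rw [Finset.sum_add_distrib, two_mul]
  congr 1
  simpa [hP, dotProduct] using dotProduct_transpose_mulVec P d' (d t)

theorem dotProduct_mulVec_le_sqrt_mul_sqrt {P : Matrix ι ι ℝ} (hP : P.PosSemidef)
    (u v : ι → ℝ) : u ⬝ᵥ P *ᵥ v ≤ √(u ⬝ᵥ P *ᵥ u) * √(v ⬝ᵥ P *ᵥ v) := by
  classical
  have hsymm : LinearMap.IsSymm (toBilin' P) :=
    LinearMap.BilinForm.isSymm_iff.mp (isSymm_toBilin'_iff_isSymm.mpr (by simpa using hP.1))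
  have hcs : (u ⬝ᵥ P *ᵥ v) ^ 2 ≤ (u ⬝ᵥ P *ᵥ u) * (v ⬝ᵥ P *ᵥ v) := by
    simpa only [toBilin'_apply'] using
      LinearMap.BilinForm.apply_sq_le_of_symm (toBilin' P)
        (fun w => by simpa [toBilin'_apply'] using hP.dotProduct_mulVec_nonneg w) hsymm u v
  rw [← Real.sqrt_mul (by simpa using hP.dotProduct_mulVec_nonneg u)]
  exact Real.le_sqrt_of_sq_le hcs

theorem dotProduct_transpose_mul_add_mul_add_smul_mulVec {P : Matrix ι ι ℝ} (hP : Pᵀ = P)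
    (A : Matrix ι ι ℝ) (γ : ℝ) (v : ι → ℝ) :
    v ⬝ᵥ (Aᵀ * P + P * A + γ • P) *ᵥ v = 2 * (v ⬝ᵥ P *ᵥ (A *ᵥ v)) + γ * (v ⬝ᵥ P *ᵥ v) := by
  have hsymm : v ⬝ᵥ Aᵀ *ᵥ (P *ᵥ v) = v ⬝ᵥ P *ᵥ (A *ᵥ v) := by
    rw [dotProduct_transpose_mulVec, dotProduct_comm, ← dotProduct_transpose_mulVec, hP]
  simp only [add_mulVec, ← mulVec_mulVec, smul_mulVec, dotProduct_add, dotProduct_smul,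
    smul_eq_mul, hsymm]
  ring

theorem sqrt_dotProduct_mulVec_sub_le_gronwallBound {P : Matrix ι ι ℝ} (hP : P.PosSemidef)
    {F : (ι → ℝ) → ι → ℝ} {γ : ℝ} (hγ : 0 ≤ γ)
    (hF : ∀ y z, 2 * ((y - z) ⬝ᵥ P *ᵥ (F y - F z)) ≤ -γ * ((y - z) ⬝ᵥ P *ᵥ (y - z)))
    {e : (ι → ℝ) → ι → ℝ} {E : ℝ} (he : ∀ y, √(e y ⬝ᵥ P *ᵥ e y) ≤ E)
    {x y : ℝ → ι → ℝ} (hx : ∀ t, 0 ≤ t → HasDerivAt x (F (x t) + e (x t)) t)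
    (hy : ∀ t, 0 ≤ t → HasDerivAt y (F (y t)) t) {t : ℝ} (ht : 0 ≤ t) :
    √((x t - y t) ⬝ᵥ P *ᵥ (x t - y t))
      ≤ gronwallBound √((x 0 - y 0) ⬝ᵥ P *ᵥ (x 0 - y 0)) (-(γ / 2)) E t := by
  have hPt : Pᵀ = P := by simpa using hP.1.eq
  have hd : ∀ s, 0 ≤ s → HasDerivAt (fun s => x s - y s) (F (x s) - F (y s) + e (x s)) s :=
    fun s hs => ((hx s hs).sub (hy s hs)).congr_deriv (by abel)
  refine sqrt_le_gronwallBound_of_deriv_le (by linarith) ((Real.sqrt_nonneg _).trans (he (x 0)))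
    (fun s => by simpa using hP.dotProduct_mulVec_nonneg (x s - y s))
    (fun s hs => hasDerivAt_dotProduct_mulVec_self hPt (hd s hs)) (fun s _ => ?_) ht
  have hcross := dotProduct_mulVec_le_sqrt_mul_sqrt hP (x s - y s) (e (x s))
  have hpert := mul_le_mul_of_nonneg_left (he (x s))
    (Real.sqrt_nonneg ((x s - y s) ⬝ᵥ P *ᵥ (x s - y s)))
  rw [mulVec_add, dotProduct_add]
  linarith [hF (x s) (y s)]

variable [DecidableEq ι]

theorem mul_dotProduct_self_le {P : Matrix ι ι ℝ} {c : ℝ} (h : (P - c • 1).PosSemidef)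
    (v : ι → ℝ) : c * (v ⬝ᵥ v) ≤ v ⬝ᵥ P *ᵥ v := by
  have := h.dotProduct_mulVec_nonneg v
  simp only [star_trivial, sub_mulVec, smul_mulVec, one_mulVec, dotProduct_sub,
    dotProduct_smul, smul_eq_mul] at this
  linarith

theorem dotProduct_mulVec_le_mul {P : Matrix ι ι ℝ} {c : ℝ} (h : (c • 1 - P).PosSemidef)
    (v : ι → ℝ) : v ⬝ᵥ P *ᵥ v ≤ c * (v ⬝ᵥ v) := by
  have := h.dotProduct_mulVec_nonneg v
  simp only [star_trivial, sub_mulVec, smul_mulVec, one_mulVec, dotProduct_sub,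
    dotProduct_smul, smul_eq_mul] at this
  linarith

end QuadraticForm

theorem sqrt_mul_eNorm_le {n : ℕ} {P : Matrix (Fin n) (Fin n) ℝ} {c : ℝ}
    (h : (P - c • 1).PosSemidef) (v : Fin n → ℝ) : √c * eNorm v ≤ √(v ⬝ᵥ P *ᵥ v) := by
  rw [eNorm, ← Real.sqrt_mul' c (by simpa using dotProduct_star_self_nonneg v)]
  exact Real.sqrt_le_sqrt (mul_dotProduct_self_le h v)

theorem sqrt_dotProduct_mulVec_le {n : ℕ} {P : Matrix (Fin n) (Fin n) ℝ} {c : ℝ}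
    (h : (c • 1 - P).PosSemidef) (v : Fin n → ℝ) : √(v ⬝ᵥ P *ᵥ v) ≤ √c * eNorm v := by
  rw [eNorm, ← Real.sqrt_mul' c (by simpa using dotProduct_star_self_nonneg v)]
  exact Real.sqrt_le_sqrt (dotProduct_mulVec_le_mul h v)

theorem dotProduct_sector_nonpos {ι : Type*} [Fintype ι] {f : ℝ → ℝ} {α β : ℝ}
    (hf : ∀ a c, (f a - f c - α * (a - c)) * (f a - f c - β * (a - c)) ≤ 0) (a c : ι → ℝ) :
    ((fun j => f (a j) - f (c j)) - α • (a - c)) ⬝ᵥ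
      ((fun j => f (a j) - f (c j)) - β • (a - c)) ≤ 0 :=
  Finset.sum_nonpos fun j _ => hf (a j) (c j)

section NeuralODE

variable {m : ℕ → ℕ} {W : (i : ℕ) → Matrix (Fin (m (i + 1))) (Fin (m i)) ℝ}
  {b : (i : ℕ) → Fin (m (i + 1)) → ℝ} {φ : ℕ → ℝ → ℝ} {α β : ℕ → ℝ}

theorem nnLayer_sub_sector_nonpos
    (hsec : ∀ i, ∀ a c : ℝ,
      (φ i a - φ i c - α i * (a - c)) * (φ i a - φ i c - β i * (a - c)) ≤ 0)
    (i : ℕ) (y z : Fin (m 0) → ℝ) :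
    (nnLayer m W b φ (i + 1) y - nnLayer m W b φ (i + 1) z
        - α i • W i *ᵥ (nnLayer m W b φ i y - nnLayer m W b φ i z)) ⬝ᵥ
      (nnLayer m W b φ (i + 1) y - nnLayer m W b φ (i + 1) z
        - β i • W i *ᵥ (nnLayer m W b φ i y - nnLayer m W b φ i z)) ≤ 0 := by
  have hpre : W i *ᵥ (nnLayer m W b φ i y - nnLayer m W b φ i z)
      = (W i *ᵥ nnLayer m W b φ i y + b i) - (W i *ᵥ nnLayer m W b φ i z + b i) := by
    rw [mulVec_sub]; abel
  rw [hpre]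
  exact dotProduct_sector_nonpos (hsec i) _ _

theorem node_field_contraction {k : ℕ} {A : Matrix (Fin (m 0)) (Fin (m 0)) ℝ}
    {Wk : Matrix (Fin (m 0)) (Fin (m k)) ℝ} (bk : Fin (m 0) → ℝ)
    (hsec : ∀ i, ∀ a c : ℝ,
      (φ i a - φ i c - α i * (a - c)) * (φ i a - φ i c - β i * (a - c)) ≤ 0)
    {P : Matrix (Fin (m 0)) (Fin (m 0)) ℝ} (hP : Pᵀ = P) {γ : ℝ}
    (hQF : ∀ v : (i : ℕ) → Fin (m i) → ℝ,
      v 0 ⬝ᵥ (Aᵀ * P + P * A + γ • P) *ᵥ v 0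
        + 2 * (v 0 ⬝ᵥ P *ᵥ (Wk *ᵥ v k))
        - 2 * ∑ i ∈ Finset.range k,
            (v (i + 1) - α i • W i *ᵥ v i) ⬝ᵥ (v (i + 1) - β i • W i *ᵥ v i) ≤ 0)
    (y z : Fin (m 0) → ℝ) :
    2 * ((y - z) ⬝ᵥ P *ᵥ ((A *ᵥ y + (Wk *ᵥ nnLayer m W b φ k y + bk))
        - (A *ᵥ z + (Wk *ᵥ nnLayer m W b φ k z + bk))))
      ≤ -γ * ((y - z) ⬝ᵥ P *ᵥ (y - z)) := by
  have hsum := Finset.sum_nonpos fun i (_ : i ∈ Finset.range k) =>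
    nnLayer_sub_sector_nonpos (W := W) (b := b) hsec i y z
  have hlmi := hQF fun i => nnLayer m W b φ i y - nnLayer m W b φ i z
  rw [show nnLayer m W b φ 0 y - nnLayer m W b φ 0 z = y - z from rfl,
    dotProduct_transpose_mul_add_mul_add_smul_mulVec hP] at hlmi
  have hfield : (A *ᵥ y + (Wk *ᵥ nnLayer m W b φ k y + bk))
      - (A *ᵥ z + (Wk *ᵥ nnLayer m W b φ k z + bk))
      = A *ᵥ (y - z) + Wk *ᵥ (nnLayer m W b φ k y - nnLayer m W b φ k z) := by
    rw [mulVec_sub, mulVec_sub]; abel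
  rw [hfield, mulVec_add, dotProduct_add]
  linarith

end NeuralODE

theorem perturbed_vs_node_trajectory_bound_general
    (k : ℕ) (m : ℕ → ℕ)
    (A : Matrix (Fin (m 0)) (Fin (m 0)) ℝ)
    (W : (i : ℕ) → Matrix (Fin (m (i + 1))) (Fin (m i)) ℝ)
    (b : (i : ℕ) → Fin (m (i + 1)) → ℝ)
    (Wk : Matrix (Fin (m 0)) (Fin (m k)) ℝ) (bk : Fin (m 0) → ℝ)
    (φ : ℕ → ℝ → ℝ) (α β : ℕ → ℝ)
    (hsec : ∀ i, ∀ a c : ℝ,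
      (φ i a - φ i c - α i * (a - c)) * (φ i a - φ i c - β i * (a - c)) ≤ 0)
    (P : Matrix (Fin (m 0)) (Fin (m 0)) ℝ) (hP : P.PosDef)
    (p₁ p₂ γ : ℝ) (hp₁ : 0 < p₁) (hγ : 0 < γ)
    (hPlo : (P - p₁ • (1 : Matrix (Fin (m 0)) (Fin (m 0)) ℝ)).PosSemidef)
    (hPhi : (p₂ • (1 : Matrix (Fin (m 0)) (Fin (m 0)) ℝ) - P).PosSemidef)
    (hQF : ∀ v : (i : ℕ) → Fin (m i) → ℝ,
      v 0 ⬝ᵥ (Aᵀ * P + P * A + γ • P).mulVec (v 0)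
        + 2 * (v 0 ⬝ᵥ P.mulVec (Wk.mulVec (v k)))
        - 2 * ∑ i ∈ Finset.range k,
            (v (i + 1) - α i • (W i).mulVec (v i)) ⬝ᵥ
              (v (i + 1) - β i • (W i).mulVec (v i)) ≤ 0)
    (ε : ℝ) (e : (Fin (m 0) → ℝ) → Fin (m 0) → ℝ)
    (he : ∀ y, eNorm (e y) ≤ ε)
    (x xnn : ℝ → Fin (m 0) → ℝ)
    (hx : ∀ t, 0 ≤ t → HasDerivAt x
      (A.mulVec (x t) + (Wk.mulVec (nnLayer m W b φ k (x t)) + bk) + e (x t)) t)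
    (hxnn : ∀ t, 0 ≤ t → HasDerivAt xnn
      (A.mulVec (xnn t) + (Wk.mulVec (nnLayer m W b φ k (xnn t)) + bk)) t) :
    ∀ t, 0 ≤ t →
      eNorm (x t - xnn t) ≤
        Real.sqrt (p₂ / p₁) * eNorm (x 0 - xnn 0) * Real.exp (-(γ / 2) * t)
          + (2 * ε / γ) * Real.sqrt (p₂ / p₁) * (1 - Real.exp (-(γ / 2) * t)) := by
  intro t ht
  have hPt : Pᵀ = P := by simpa using hP.1.eq
  have hE : ∀ y, √(e y ⬝ᵥ P *ᵥ e y) ≤ √p₂ * ε := fun y =>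
    (sqrt_dotProduct_mulVec_le hPhi (e y)).trans
      (mul_le_mul_of_nonneg_left (he y) (Real.sqrt_nonneg _))
  have hdist := sqrt_dotProduct_mulVec_sub_le_gronwallBound hP.posSemidef hγ.le
    (node_field_contraction bk hsec hPt hQF) hE hx hxnn ht
  rw [gronwallBound_of_K_ne_0 (by linarith)] at hdist
  dsimp only at hdist
  have hscaled : √p₁ * eNorm (x t - xnn t) ≤ √p₂ * eNorm (x 0 - xnn 0) * Real.exp (-(γ / 2) * t)
      + √p₂ * ε / -(γ / 2) * (Real.exp (-(γ / 2) * t) - 1) := by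
    calc √p₁ * eNorm (x t - xnn t) ≤ √((x t - xnn t) ⬝ᵥ P *ᵥ (x t - xnn t)) :=
          sqrt_mul_eNorm_le hPlo _
      _ ≤ _ := hdist
      _ ≤ _ := by gcongr; exact sqrt_dotProduct_mulVec_le hPhi _
  rw [Real.sqrt_div' p₂ hp₁.le, ← mul_le_mul_iff_of_pos_left (Real.sqrt_pos.mpr hp₁)]
  refine hscaled.trans_eq ?_
  field_simp
  ring

/-- Proposition 1: bound on the distance between a trajectory of the
perturbed system `ẋ = A x + Z(x) + e(x)` and a trajectory of the contractive multilayer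
NODE system. -/
theorem perturbed_vs_node_trajectory_bound
    (k : ℕ) (hk : 1 ≤ k) (m : ℕ → ℕ)
    (A : Matrix (Fin (m 0)) (Fin (m 0)) ℝ)
    (W : (i : ℕ) → Matrix (Fin (m (i + 1))) (Fin (m i)) ℝ)
    (b : (i : ℕ) → Fin (m (i + 1)) → ℝ)
    (Wk : Matrix (Fin (m 0)) (Fin (m k)) ℝ) (bk : Fin (m 0) → ℝ)
    (φ : ℕ → ℝ → ℝ) (α β : ℕ → ℝ)
    (hsec : ∀ i, ∀ a c : ℝ,
      (φ i a - φ i c - α i * (a - c)) * (φ i a - φ i c - β i * (a - c)) ≤ 0)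
    (P : Matrix (Fin (m 0)) (Fin (m 0)) ℝ) (hP : P.PosDef)
    (p₁ p₂ γ : ℝ) (hp₁ : 0 < p₁) (hp₁₂ : p₁ ≤ p₂) (hγ : 0 < γ)
    (hPlo : (P - p₁ • (1 : Matrix (Fin (m 0)) (Fin (m 0)) ℝ)).PosSemidef)
    (hPhi : (p₂ • (1 : Matrix (Fin (m 0)) (Fin (m 0)) ℝ) - P).PosSemidef)
    (hQF : ∀ v : (i : ℕ) → Fin (m i) → ℝ,
      v 0 ⬝ᵥ (Aᵀ * P + P * A + γ • P).mulVec (v 0)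
        + 2 * (v 0 ⬝ᵥ P.mulVec (Wk.mulVec (v k)))
        - 2 * ∑ i ∈ Finset.range k,
            (v (i + 1) - α i • (W i).mulVec (v i)) ⬝ᵥ
              (v (i + 1) - β i • (W i).mulVec (v i)) ≤ 0)
    (ε : ℝ) (e : (Fin (m 0) → ℝ) → Fin (m 0) → ℝ)
    (he : ∀ y, eNorm (e y) ≤ ε)
    (x xnn : ℝ → Fin (m 0) → ℝ)
    (hx : ∀ t, 0 ≤ t → HasDerivAt x
      (A.mulVec (x t) + (Wk.mulVec (nnLayer m W b φ k (x t)) + bk) + e (x t)) t)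
    (hxnn : ∀ t, 0 ≤ t → HasDerivAt xnn
      (A.mulVec (xnn t) + (Wk.mulVec (nnLayer m W b φ k (xnn t)) + bk)) t) :
    ∀ t, 0 ≤ t →
      eNorm (x t - xnn t) ≤
        Real.sqrt (p₂ / p₁) * eNorm (x 0 - xnn 0) * Real.exp (-(γ / 2) * t)
          + (2 * ε / γ) * Real.sqrt (p₂ / p₁) * (1 - Real.exp (-(γ / 2) * t)) :=
  perturbed_vs_node_trajectory_bound_general k m A W b Wk bk φ α β hsec P hP p₁ p₂ γ hp₁ hγ hPlo
    hPhi hQF ε e he x xnn hx hxnn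
end

section
/- Consider layer widths m₀ = n, m₁, …, mₖ (k ≥ 1), weights W^{i+1} ∈ ℝ^{m_{i+1}×m_i} for i = 0,…,k−1, biases b^{i+1} ∈ ℝ^{m_{i+1}}, scalar activations φ^{i+1} incrementally sector bounded by [α^{i+1}, β^{i+1}] on ℝ applied componentwise as Φ^{i+1}, layer maps w⁰(x) = x and w^{i+1}(x) = Φ^{i+1}(W^{i+1}·w^{i}(x) + b^{i+1}), and matrices A ∈ ℝ^{n×n}, g ∈ ℝ^{n×l}, H ∈ ℝ^{l×n}, W_min ∈ ℝ^{n×mₖ}, c ∈ ℝⁿ. Suppose there exist a symmetric positive definite P ∈ ℝ^{n×n} and constants 0 < p̲ ≤ p̄, γ > 0 with p̲·I ⪯ P ⪯ p̄·I such that for all v⁰ ∈ ℝⁿ and vⁱ ∈ ℝ^{mᵢ}, i = 1,…,k: ⟨v⁰, ((A+gH)ᵀP + P(A+gH) + γP)·v⁰⟩ + 2·⟨v⁰, P·W_min·vᵏ⟩ − 2·Σ_{i=0}^{k−1} ⟨v^{i+1} − α^{i+1}·W^{i+1}·vⁱ, v^{i+1} − β^{i+1}·W^{i+1}·vⁱ⟩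 ≤ 0. Then any two differentiable functions x₁, x₂ : [0,∞) → ℝⁿ satisfying ẋ(t) = (A + gH)·x(t) + W_min·wᵏ(x(t)) + c for all t ≥ 0 satisfy ‖x₁(t) − x₂(t)‖ ≤ √(p̄/p̲)·e^{−(γ/2)·t}·‖x₁(0) − x₂(0)‖ for all t ≥ 0. -/
/-!
Along two trajectories the error `e = x₁ - x₂` satisfies `ė = (A + gH) e + W_min vᵏ`, where `vⁱ`
are the increments of the layer maps. Every layer increment obeys the incremental sector
condition componentwise, so the sum in the quadratic-form condition is nonpositive, and that
condition with `v⁰ = e` yields `d/dt (eᵀPe) ≤ -γ eᵀPe`. Grönwall's inequality gives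
`eᵀPe(t) ≤ e^{-γt} eᵀPe(0)`, and `p̲ I ⪯ P ⪯ p̄ I` turns this into the norm estimate.
-/

open Matrix

section QuadraticForm

variable {n : Type*} [Fintype n]

theorem HasDerivAt.dotProduct {f g : ℝ → n → ℝ} {f' g' : n → ℝ} {t : ℝ}
    (hf : HasDerivAt f f' t) (hg : HasDerivAt g g' t) :
    HasDerivAt (fun s => f s ⬝ᵥ g s) (f' ⬝ᵥ g t + f t ⬝ᵥ g') t := by
  have : HasDerivAt (fun s => ∑ i, f s i * g s i) (∑ i, (f' i * g t i + f t i * g' i)) t :=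
    .fun_sum fun i _ => (hasDerivAt_pi.mp hf i).fun_mul (hasDerivAt_pi.mp hg i)
  rwa [Finset.sum_add_distrib] at this

theorem HasDerivAt.const_mulVec {m : Type*} (A : Matrix m n ℝ) {f : ℝ → n → ℝ} {f' : n → ℝ}
    {t : ℝ} (hf : HasDerivAt f f' t) : HasDerivAt (fun s => A *ᵥ f s) (A *ᵥ f') t :=
  hasDerivAt_pi.mpr fun i => by
    simpa [mulVec] using (hasDerivAt_const t (A i)).dotProduct hf

theorem dotProduct_mulVec_comm_of_transpose_eq {P : Matrix n n ℝ} (hP : Pᵀ = P) (u w : n → ℝ) :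
    u ⬝ᵥ P *ᵥ w = w ⬝ᵥ P *ᵥ u := by
  simpa [hP] using (dotProduct_transpose_mulVec P w u).symm

theorem HasDerivAt.dotProduct_mulVec_self {P : Matrix n n ℝ} (hP : Pᵀ = P) {e : ℝ → n → ℝ}
    {e' : n → ℝ} {t : ℝ} (he : HasDerivAt e e' t) :
    HasDerivAt (fun s => e s ⬝ᵥ P *ᵥ e s) (2 * (e t ⬝ᵥ P *ᵥ e')) t :=
  (he.dotProduct (he.const_mulVec P)).congr_deriv <| by
    rw [dotProduct_mulVec_comm_of_transpose_eq hP e']; ring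

theorem dotProduct_lyapunov_mulVec {P : Matrix n n ℝ} (hP : Pᵀ = P) (M : Matrix n n ℝ) (γ : ℝ)
    (x : n → ℝ) :
    x ⬝ᵥ (Mᵀ * P + P * M + γ • P) *ᵥ x = 2 * (x ⬝ᵥ P *ᵥ M *ᵥ x) + γ * (x ⬝ᵥ P *ᵥ x) := by
  have hMP : x ⬝ᵥ (Mᵀ * P) *ᵥ x = x ⬝ᵥ P *ᵥ M *ᵥ x := by
    rw [← mulVec_mulVec, dotProduct_transpose_mulVec, dotProduct_comm,
      dotProduct_mulVec_comm_of_transpose_eq hP]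
  rw [add_mulVec, add_mulVec, dotProduct_add, dotProduct_add, hMP, ← mulVec_mulVec,
    smul_mulVec, dotProduct_smul, smul_eq_mul]
  ring

variable [DecidableEq n] {P : Matrix n n ℝ} {p : ℝ}

theorem Matrix.PosSemidef.mul_dotProduct_self_le_dotProduct_mulVec (h : (P - p • 1).PosSemidef)
    (x : n → ℝ) :
    p * (x ⬝ᵥ x) ≤ x ⬝ᵥ P *ᵥ x := by
  have := h.dotProduct_mulVec_nonneg x
  simp only [star_trivial, sub_mulVec, smul_mulVec, one_mulVec, dotProduct_sub,
    dotProduct_smul, smul_eq_mul] at this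
  linarith

theorem Matrix.PosSemidef.dotProduct_mulVec_le_mul_dotProduct_self (h : (p • 1 - P).PosSemidef)
    (x : n → ℝ) :
    x ⬝ᵥ P *ᵥ x ≤ p * (x ⬝ᵥ x) := by
  have := h.dotProduct_mulVec_nonneg x
  simp only [star_trivial, sub_mulVec, smul_mulVec, one_mulVec, dotProduct_sub,
    dotProduct_smul, smul_eq_mul] at this
  linarith

end QuadraticForm

theorem le_mul_exp_of_hasDerivAt_le {V V' : ℝ → ℝ} {γ : ℝ}
    (hV : ∀ t, 0 ≤ t → HasDerivAt V (V' t) t) (hdecay : ∀ t, 0 ≤ t → V' t ≤ -γ * V t)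
    {t : ℝ} (ht : 0 ≤ t) : V t ≤ V 0 * Real.exp (-γ * t) := by
  have := le_gronwallBound_of_liminf_deriv_right_le (a := 0) (b := t) (δ := V 0) (ε := 0)
    (fun s hs => (hV s hs.1).continuousAt.continuousWithinAt)
    (fun s hs _ hr => (hV s hs.1).hasDerivWithinAt.liminf_right_slope_le hr) le_rfl
    (fun s hs => by rw [add_zero]; exact hdecay s hs.1) t ⟨ht, le_rfl⟩
  simpa [gronwallBound_ε0] using this

theorem eNorm_le_of_dotProduct_mulVec_le {d : ℕ} {P : Matrix (Fin d) (Fin d) ℝ} {p₁ p₂ r : ℝ}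
    (hp₁ : 0 < p₁) (hPlo : (P - p₁ • 1).PosSemidef) (hPhi : (p₂ • 1 - P).PosSemidef)
    (hr : 0 ≤ r) {x y : Fin d → ℝ} (h : y ⬝ᵥ P *ᵥ y ≤ x ⬝ᵥ P *ᵥ x * r ^ 2) :
    eNorm y ≤ Real.sqrt (p₂ / p₁) * r * eNorm x := by
  have hx : 0 ≤ x ⬝ᵥ x := Finset.sum_nonneg fun i _ => mul_self_nonneg (x i)
  have hsq : y ⬝ᵥ y ≤ p₂ / p₁ * (r ^ 2 * (x ⬝ᵥ x)) := by
    rw [div_mul_eq_mul_div, le_div_iff₀ hp₁]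
    nlinarith [hPlo.mul_dotProduct_self_le_dotProduct_mulVec y,
      mul_le_mul_of_nonneg_right (hPhi.dotProduct_mulVec_le_mul_dotProduct_self x) (sq_nonneg r)]
  calc eNorm y ≤ Real.sqrt (p₂ / p₁ * (r ^ 2 * (x ⬝ᵥ x))) := Real.sqrt_le_sqrt hsq
    _ = Real.sqrt (p₂ / p₁) * r * eNorm x := by
      rw [Real.sqrt_mul' _ (by positivity), Real.sqrt_mul' _ hx, Real.sqrt_sq hr, eNorm, mul_assoc]

theorem dotProduct_comp_sub_sector_nonpos {ι : Type*} [Fintype ι] {φ : ℝ → ℝ} {α β : ℝ}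
    (hφ : ∀ a d, (φ a - φ d - α * (a - d)) * (φ a - φ d - β * (a - d)) ≤ 0) (u w : ι → ℝ) :
    (φ ∘ u - φ ∘ w - α • (u - w)) ⬝ᵥ (φ ∘ u - φ ∘ w - β • (u - w)) ≤ 0 :=
  Finset.sum_nonpos fun i _ => hφ (u i) (w i)

section Network

variable {m : ℕ → ℕ} (W : (i : ℕ) → Matrix (Fin (m (i + 1))) (Fin (m i)) ℝ)
  (b : (i : ℕ) → Fin (m (i + 1)) → ℝ) (φ : ℕ → ℝ → ℝ)

noncomputable def nnLayerDiff (x y : Fin (m 0) → ℝ) (i : ℕ) : Fin (m i) → ℝ :=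
  nnLayer m W b φ i x - nnLayer m W b φ i y

theorem nnLayerDiff_sector_nonpos {α β : ℕ → ℝ}
    (hsec : ∀ i, ∀ a d : ℝ,
      (φ i a - φ i d - α i * (a - d)) * (φ i a - φ i d - β i * (a - d)) ≤ 0)
    (x y : Fin (m 0) → ℝ) (i : ℕ) :
    (nnLayerDiff W b φ x y (i + 1) - α i • W i *ᵥ nnLayerDiff W b φ x y i) ⬝ᵥ
      (nnLayerDiff W b φ x y (i + 1) - β i • W i *ᵥ nnLayerDiff W b φ x y i) ≤ 0 := by
  have hpre : W i *ᵥ nnLayerDiff W b φ x y i =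
      (W i *ᵥ nnLayer m W b φ i x + b i) - (W i *ᵥ nnLayer m W b φ i y + b i) := by
    rw [nnLayerDiff, mulVec_sub]; abel
  rw [hpre]
  exact dotProduct_comp_sub_sector_nonpos (hsec i) _ _

end Network

theorem controlled_multilayer_contractive_general
    (k : ℕ) (m : ℕ → ℕ) (l : ℕ)
    (A : Matrix (Fin (m 0)) (Fin (m 0)) ℝ)
    (g : Matrix (Fin (m 0)) (Fin l) ℝ) (H : Matrix (Fin l) (Fin (m 0)) ℝ)
    (W : (i : ℕ) → Matrix (Fin (m (i + 1))) (Fin (m i)) ℝ)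
    (b : (i : ℕ) → Fin (m (i + 1)) → ℝ)
    (Wmin : Matrix (Fin (m 0)) (Fin (m k)) ℝ) (c : Fin (m 0) → ℝ)
    (φ : ℕ → ℝ → ℝ) (α β : ℕ → ℝ)
    (hsec : ∀ i, ∀ a d : ℝ,
      (φ i a - φ i d - α i * (a - d)) * (φ i a - φ i d - β i * (a - d)) ≤ 0)
    (P : Matrix (Fin (m 0)) (Fin (m 0)) ℝ)
    (p₁ p₂ γ : ℝ) (hp₁ : 0 < p₁)
    (hPlo : (P - p₁ • (1 : Matrix (Fin (m 0)) (Fin (m 0)) ℝ)).PosSemidef)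
    (hPhi : (p₂ • (1 : Matrix (Fin (m 0)) (Fin (m 0)) ℝ) - P).PosSemidef)
    (hQF : ∀ v : (i : ℕ) → Fin (m i) → ℝ,
      v 0 ⬝ᵥ ((A + g * H)ᵀ * P + P * (A + g * H) + γ • P).mulVec (v 0)
        + 2 * (v 0 ⬝ᵥ P.mulVec (Wmin.mulVec (v k)))
        - 2 * ∑ i ∈ Finset.range k,
            (v (i + 1) - α i • (W i).mulVec (v i)) ⬝ᵥ
              (v (i + 1) - β i • (W i).mulVec (v i)) ≤ 0)
    (x₁ x₂ : ℝ → Fin (m 0) → ℝ)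
    (hx₁ : ∀ t, 0 ≤ t → HasDerivAt x₁
      ((A + g * H).mulVec (x₁ t) + Wmin.mulVec (nnLayer m W b φ k (x₁ t)) + c) t)
    (hx₂ : ∀ t, 0 ≤ t → HasDerivAt x₂
      ((A + g * H).mulVec (x₂ t) + Wmin.mulVec (nnLayer m W b φ k (x₂ t)) + c) t) :
    ∀ t, 0 ≤ t →
      eNorm (x₁ t - x₂ t) ≤
        Real.sqrt (p₂ / p₁) * Real.exp (-(γ / 2) * t) * eNorm (x₁ 0 - x₂ 0) := by
  have hPsymm : Pᵀ = P := by
    simpa [IsHermitian, conjTranspose_sub] using hPlo.isHermitian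
  set e : ℝ → Fin (m 0) → ℝ := fun t => x₁ t - x₂ t
  set v : ℝ → (i : ℕ) → Fin (m i) → ℝ := fun t => nnLayerDiff W b φ (x₁ t) (x₂ t)
  have he : ∀ t, 0 ≤ t → HasDerivAt e ((A + g * H) *ᵥ e t + Wmin *ᵥ v t k) t := fun t ht =>
    ((hx₁ t ht).sub (hx₂ t ht)).congr_deriv (by simp only [e, v, nnLayerDiff, mulVec_sub]; abel)
  have hdecay : ∀ t, 0 ≤ t →
      2 * (e t ⬝ᵥ P *ᵥ ((A + g * H) *ᵥ e t + Wmin *ᵥ v t k)) ≤ -γ * (e t ⬝ᵥ P *ᵥ e t) := by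
    intro t _
    have hsector := Finset.sum_nonpos fun i (_ : i ∈ Finset.range k) =>
      nnLayerDiff_sector_nonpos W b φ hsec (x₁ t) (x₂ t) i
    have hQ := hQF (v t)
    rw [show v t 0 = e t from rfl, dotProduct_lyapunov_mulVec hPsymm] at hQ
    rw [mulVec_add, dotProduct_add]
    linarith
  intro t ht
  have hexp : Real.exp (-γ * t) = Real.exp (-(γ / 2) * t) ^ 2 := by
    rw [← Real.exp_nat_mul]; ring_nf
  refine eNorm_le_of_dotProduct_mulVec_le hp₁ hPlo hPhi (Real.exp_nonneg _) ?_
  rw [← hexp]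
  exact le_mul_exp_of_hasDerivAt_le (fun s hs => (he s hs).dotProduct_mulVec_self hPsymm) hdecay ht

/-- Theorem 6: contraction of the controlled multilayer system
`ẋ = (A + gH) x + W_min wᵏ(x) + c` under the quadratic-form condition. -/
theorem controlled_multilayer_contractive
    (k : ℕ) (hk : 1 ≤ k) (m : ℕ → ℕ) (l : ℕ)
    (A : Matrix (Fin (m 0)) (Fin (m 0)) ℝ)
    (g : Matrix (Fin (m 0)) (Fin l) ℝ) (H : Matrix (Fin l) (Fin (m 0)) ℝ)
    (W : (i : ℕ) → Matrix (Fin (m (i + 1))) (Fin (m i)) ℝ)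
    (b : (i : ℕ) → Fin (m (i + 1)) → ℝ)
    (Wmin : Matrix (Fin (m 0)) (Fin (m k)) ℝ) (c : Fin (m 0) → ℝ)
    (φ : ℕ → ℝ → ℝ) (α β : ℕ → ℝ)
    (hsec : ∀ i, ∀ a d : ℝ,
      (φ i a - φ i d - α i * (a - d)) * (φ i a - φ i d - β i * (a - d)) ≤ 0)
    (P : Matrix (Fin (m 0)) (Fin (m 0)) ℝ) (hP : P.PosDef)
    (p₁ p₂ γ : ℝ) (hp₁ : 0 < p₁) (hp₁₂ : p₁ ≤ p₂) (hγ : 0 < γ)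
    (hPlo : (P - p₁ • (1 : Matrix (Fin (m 0)) (Fin (m 0)) ℝ)).PosSemidef)
    (hPhi : (p₂ • (1 : Matrix (Fin (m 0)) (Fin (m 0)) ℝ) - P).PosSemidef)
    (hQF : ∀ v : (i : ℕ) → Fin (m i) → ℝ,
      v 0 ⬝ᵥ ((A + g * H)ᵀ * P + P * (A + g * H) + γ • P).mulVec (v 0)
        + 2 * (v 0 ⬝ᵥ P.mulVec (Wmin.mulVec (v k)))
        - 2 * ∑ i ∈ Finset.range k,
            (v (i + 1) - α i • (W i).mulVec (v i)) ⬝ᵥ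
              (v (i + 1) - β i • (W i).mulVec (v i)) ≤ 0)
    (x₁ x₂ : ℝ → Fin (m 0) → ℝ)
    (hx₁ : ∀ t, 0 ≤ t → HasDerivAt x₁
      ((A + g * H).mulVec (x₁ t) + Wmin.mulVec (nnLayer m W b φ k (x₁ t)) + c) t)
    (hx₂ : ∀ t, 0 ≤ t → HasDerivAt x₂
      ((A + g * H).mulVec (x₂ t) + Wmin.mulVec (nnLayer m W b φ k (x₂ t)) + c) t) :
    ∀ t, 0 ≤ t →
      eNorm (x₁ t - x₂ t) ≤
        Real.sqrt (p₂ / p₁) * Real.exp (-(γ / 2) * t) * eNorm (x₁ 0 - x₂ 0) :=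
  controlled_multilayer_contractive_general k m l A g H W b Wmin c φ α β hsec P p₁ p₂ γ hp₁ hPlo
    hPhi hQF x₁ x₂ hx₁ hx₂
end
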